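/- Let ℓ⁻ < ℓ⁺ be real numbers, set ℓ = (ℓ⁺ + ℓ⁻)/2, and define f : ℤ^d → ℝ by f(z) = T(0,z) − T(e₂,z) for a pseudometric T with T(0,e₂) ≤ 1. Suppose limsup_{k→∞} f(k e₂) ≥ ℓ⁺ and liminf_{k→−∞} f(k e₂) ≤ ℓ⁻. Then both V̄ = {z : f(z) ≥ ℓ} and V_ = {z : f(z) < ℓ} are infinite subsets of ℤ^d, and every vertex of a geodesic from 0 to a point of V_ lies in V_, while every vertex of a geodesic from e₂ to a point of V̄ lies in V̄. -/
import Mathlib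


noncomputable section

/-- The second coordinate vector `e₂` of `ℤ^d`. -/
def e₂ (d : ℕ) : Fin d → ℤ := fun j => if (j : ℕ) = 1 then 1 else 0

theorem stmt17 (d : ℕ) (hd : 2 ≤ d) (T : (Fin d → ℤ) → (Fin d → ℤ) → ℝ)
    (hrefl : ∀ x, T x x = 0) (hsymm : ∀ x y, T x y = T y x)
    (htri : ∀ x y z, T x z ≤ T x y + T y z)
    (hT01 : T 0 (e₂ d) ≤ 1)
    (ℓminus ℓplus ℓ : ℝ) (hlt : ℓminus < ℓplus) (hℓ : ℓ = (ℓplus + ℓminus) / 2)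
    (f : (Fin d → ℤ) → ℝ) (hf : ∀ z, f z = T 0 z - T (e₂ d) z)
    (hlimsup : ℓplus ≤ Filter.limsup (fun k : ℕ => f ((k : ℤ) • e₂ d)) Filter.atTop)
    (hliminf : Filter.liminf (fun k : ℕ => f (-(k : ℤ) • e₂ d)) Filter.atTop ≤ ℓminus) :
    {z : Fin d → ℤ | ℓ ≤ f z}.Infinite ∧
    {z : Fin d → ℤ | f z < ℓ}.Infinite ∧
    (∀ z, f z < ℓ → ∀ w, T 0 w + T w z = T 0 z → f w < ℓ) ∧
    (∀ z, ℓ ≤ f z → ∀ w, T (e₂ d) w + T w z = T (e₂ d) z → ℓ ≤ f w) := by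
  have hbound : ∀ z, -1 ≤ f z ∧ f z ≤ 1 := by
    intro z
    have h1 : T 0 z ≤ T 0 (e₂ d) + T (e₂ d) z := htri _ _ _
    have h2 : T (e₂ d) z ≤ T (e₂ d) 0 + T 0 z := htri _ _ _
    have h3 : T (e₂ d) 0 = T 0 (e₂ d) := hsymm _ _
    constructor <;> rw [hf] <;> linarith
  have hℓlt : ℓ < ℓplus := by rw [hℓ]; linarith
  have hℓgt : ℓminus < ℓ := by rw [hℓ]; linarith
  -- injectivity of k ↦ (k:ℤ) • e₂ d and k ↦ -(k:ℤ) • e₂ d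
  have hidx : (1 : ℕ) < d := lt_of_lt_of_le one_lt_two hd
  have heval : ∀ c : ℤ, (c • e₂ d) ⟨1, hidx⟩ = c := by
    intro c
    simp [e₂]
  have hinj1 : Function.Injective (fun k : ℕ => ((k : ℤ) • e₂ d)) := by
    intro a b h
    have := congrFun h ⟨1, hidx⟩
    simp only [heval] at this
    exact_mod_cast this
  have hinj2 : Function.Injective (fun k : ℕ => (-(k : ℤ) • e₂ d)) := by
    intro a b h
    have := congrFun h ⟨1, hidx⟩
    simp only [heval] at this
    have : (a : ℤ) = b := by linarith
    exact_mod_cast this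
  have hcobdd1 : Filter.IsCoboundedUnder (· ≤ ·) Filter.atTop
      (fun k : ℕ => f ((k : ℤ) • e₂ d)) := by
    apply Filter.IsBoundedUnder.isCoboundedUnder_le
    exact Filter.isBoundedUnder_of ⟨-1, fun k => (hbound _).1⟩
  have hcobdd2 : Filter.IsCoboundedUnder (· ≥ ·) Filter.atTop
      (fun k : ℕ => f (-(k : ℤ) • e₂ d)) := by
    apply Filter.IsBoundedUnder.isCoboundedUnder_ge
    exact Filter.isBoundedUnder_of ⟨1, fun k => (hbound _).2⟩
  have hfreq1 : ∃ᶠ k : ℕ in Filter.atTop, ℓ < f ((k : ℤ) • e₂ d) :=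
    Filter.frequently_lt_of_lt_limsup hcobdd1 (lt_of_lt_of_le hℓlt hlimsup)
  have hfreq2 : ∃ᶠ k : ℕ in Filter.atTop, f (-(k : ℤ) • e₂ d) < ℓ :=
    Filter.frequently_lt_of_liminf_lt hcobdd2 (lt_of_le_of_lt hliminf hℓgt)
  have hinf1 : {k : ℕ | ℓ < f ((k : ℤ) • e₂ d)}.Infinite :=
    Nat.frequently_atTop_iff_infinite.mp hfreq1
  have hinf2 : {k : ℕ | f (-(k : ℤ) • e₂ d) < ℓ}.Infinite :=
    Nat.frequently_atTop_iff_infinite.mp hfreq2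
  refine ⟨?_, ?_, ?_, ?_⟩
  · have := (hinf1.image (hinj1.injOn))
    refine this.mono ?_
    rintro z ⟨k, hk, rfl⟩
    exact hk.out.le
  · have := (hinf2.image (hinj2.injOn))
    refine this.mono ?_
    rintro z ⟨k, hk, rfl⟩
    exact hk
  · intro z hz w hw
    have h1 : T (e₂ d) z ≤ T (e₂ d) w + T w z := htri _ _ _
    have h2 : f w ≤ f z := by rw [hf, hf]; linarith
    exact lt_of_le_of_lt h2 hz
  · intro z hz w hw
    have h1 : T 0 z ≤ T 0 w + T w z := htri _ _ _
    have h2 : f z ≤ f w := by rw [hf, hf]; linarith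
    exact le_trans hz h2
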